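/- arXiv:1308.1228 — 5 statements merged into one kernel-verified Lean document; each statement's English description precedes it below -/
import Mathlib

section
/- If R is a bisimulation up to bisimilarity between two K × (−)^A-coalgebras, then R is contained in bisimilarity: whenever x R y, we have x ∼ y. -/
/-- A bisimulation between `K × (−)^A`-coalgebras `(X,(oX,δX))` and `(Y,(oY,δY))`. -/
def IsBisim {X Y A K : Type} (oX : X → K) (δX : X → A → X)
    (oY : Y → K) (δY : Y → A → Y) (R : X → Y → Prop) : Prop :=
  ∀ x y, R x y → oX x = oY y ∧ ∀ a, R (δX x a) (δY y a)

/-- Bisimilarity: the union of all bisimulations. -/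
def Bisimilar {X Y A K : Type} (oX : X → K) (δX : X → A → X)
    (oY : Y → K) (δY : Y → A → Y) (x : X) (y : Y) : Prop :=
  ∃ R, IsBisim oX δX oY δY R ∧ R x y

/-- A bisimulation up to bisimilarity. -/
def IsBisimUpToBisim {X Y A K : Type} (oX : X → K) (δX : X → A → X)
    (oY : Y → K) (δY : Y → A → Y) (R : X → Y → Prop) : Prop :=
  ∀ x y, R x y → oX x = oY y ∧
    ∀ a, ∃ x' y', Bisimilar oX δX oX δX (δX x a) x' ∧ R x' y' ∧
      Bisimilar oY δY oY δY y' (δY y a)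

/-!
Close `R` under bisimilarity on both sides: `∼ ∘ R ∘ ∼` contains `R` (bisimilarity is
reflexive), and it is a bisimulation, because bisimilarity is transitive and preserved by
transitions, so the up-to witnesses `x_a ∼ x' R y' ∼ y_a` of a pair `u ∼ x R y ∼ v` give
`u_a ∼ x' R y' ∼ v_a`.
-/

section

variable {X Y Z A K : Type} {oX : X → K} {δX : X → A → X} {oY : Y → K} {δY : Y → A → Y}
  {oZ : Z → K} {δZ : Z → A → Z}

theorem isBisim_eq : IsBisim oX δX oX δX Eq := by
  rintro x _ rfl
  exact ⟨rfl, fun _ => rfl⟩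

theorem IsBisim.comp {R : X → Y → Prop} {S : Y → Z → Prop} (hR : IsBisim oX δX oY δY R)
    (hS : IsBisim oY δY oZ δZ S) : IsBisim oX δX oZ δZ (Relation.Comp R S) := by
  rintro x z ⟨y, hxy, hyz⟩
  obtain ⟨hoxy, hδxy⟩ := hR x y hxy
  obtain ⟨hoyz, hδyz⟩ := hS y z hyz
  exact ⟨hoxy.trans hoyz, fun a => ⟨δY y a, hδxy a, hδyz a⟩⟩

namespace Bisimilar

theorem refl (x : X) : Bisimilar oX δX oX δX x x :=
  ⟨Eq, isBisim_eq, rfl⟩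

theorem trans {x : X} {y : Y} {z : Z} (hxy : Bisimilar oX δX oY δY x y)
    (hyz : Bisimilar oY δY oZ δZ y z) : Bisimilar oX δX oZ δZ x z := by
  obtain ⟨R, hR, hxy⟩ := hxy
  obtain ⟨S, hS, hyz⟩ := hyz
  exact ⟨Relation.Comp R S, hR.comp hS, y, hxy, hyz⟩

theorem obs_eq {x : X} {y : Y} (h : Bisimilar oX δX oY δY x y) : oX x = oY y := by
  obtain ⟨R, hR, hxy⟩ := h
  exact (hR x y hxy).1

theorem step {x : X} {y : Y} (h : Bisimilar oX δX oY δY x y) (a : A) :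
    Bisimilar oX δX oY δY (δX x a) (δY y a) := by
  obtain ⟨R, hR, hxy⟩ := h
  exact ⟨R, hR, (hR x y hxy).2 a⟩

end Bisimilar

theorem IsBisimUpToBisim.isBisim_bisimilar_comp {R : X → Y → Prop}
    (h : IsBisimUpToBisim oX δX oY δY R) :
    IsBisim oX δX oY δY
      (Relation.Comp (Bisimilar oX δX oX δX) (Relation.Comp R (Bisimilar oY δY oY δY))) := by
  rintro u v ⟨x, hux, y, hxy, hyv⟩
  obtain ⟨hoxy, hδxy⟩ := h x y hxy
  refine ⟨hux.obs_eq.trans (hoxy.trans hyv.obs_eq), fun a => ?_⟩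
  obtain ⟨x', y', hx', hx'y', hy'⟩ := hδxy a
  exact ⟨x', (hux.step a).trans hx', y', hx'y', hy'.trans (hyv.step a)⟩

end

/-- Every bisimulation up to bisimilarity is contained in bisimilarity. -/
theorem bisimUpToBisim_le_bisimilar {X Y A K : Type}
    (oX : X → K) (δX : X → A → X) (oY : Y → K) (δY : Y → A → Y)
    (R : X → Y → Prop) (h : IsBisimUpToBisim oX δX oY δY R) :
    ∀ x y, R x y → Bisimilar oX δX oY δY x y :=
  fun x y hxy =>
    ⟨_, h.isBisim_bisimilar_comp, x, Bisimilar.refl x, y, hxy, Bisimilar.refl y⟩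
end

section
/- In the grammar automaton (P_ω(X*),(ô,δ̂)) generated from a context-free grammar in Greibach normal form, for all words s, t ∈ X* the product rule holds: ô({st}) = ô({s}) ∧ ô({t}), and {st}_a = {s}_a·{t} ∪ i(ô({s}))·{t}_a. -/
/-- Language concatenation `S·T = { st | s ∈ S, t ∈ T }`. -/
def lcat {Y : Type} (S T : Set (List Y)) : Set (List Y) :=
  Set.image2 (· ++ ·) S T

/-- `i : B → P(Y*)`, sending `1` to `{ε}` and `0` to `∅` (Booleans as `Prop`). -/
def iB {Y : Type} (p : Prop) : Set (List Y) := {w | w = [] ∧ p}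

section GrammarAutomaton

variable {X A : Type} (o : X → Prop) (δ : X → A → Set (List X))

/-- Output `ô({s})` of a single word of nonterminals:
`ô({ε}) = 1`, `ô({xw}) = o(x) ∧ ô({w})`. -/
def oWord : List X → Prop
  | [] => True
  | x :: w => o x ∧ oWord w

/-- Derivative `{s}_a` of a single word of nonterminals:
`{ε}_a = ∅`, `{xw}_a = x_a·{w} ∪ i(o(x))·{w}_a`. -/
def dWord : List X → A → Set (List X)
  | [], _ => ∅
  | x :: w, a => lcat (δ x a) {w} ∪ lcat (iB (o x)) (dWord w a)

/-- Output `ô(S) = ⋁_{s ∈ S} ô({s})` of a language of words of nonterminals. -/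
def oSet (S : Set (List X)) : Prop := ∃ s ∈ S, oWord o s

/-- Derivative `S_a = ⋃_{s ∈ S} {s}_a`. -/
def dSet (S : Set (List X)) (a : A) : Set (List X) :=
  ⋃ s ∈ S, dWord o δ s a

/-- Iterated word derivative: `S_ε = S`, `S_{aw} = (S_a)_w`. -/
def dSetWord (S : Set (List X)) : List A → Set (List X)
  | [] => S
  | a :: w => dSetWord (dSet o δ S a) w

/-- One derivation step of the grammar in Greibach normal form determined by
`(o, δ)`: productions are `x → ε` when `o x` holds, and `x → aw` when `w ∈ δ x a`. -/
inductive GStep : List (X ⊕ A) → List (X ⊕ A) → Prop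
  | eps (l r : List (X ⊕ A)) (x : X) (h : o x) :
      GStep (l ++ Sum.inl x :: r) (l ++ r)
  | prod (l r : List (X ⊕ A)) (x : X) (a : A) (w : List X) (h : w ∈ δ x a) :
      GStep (l ++ Sum.inl x :: r) (l ++ Sum.inr a :: w.map Sum.inl ++ r)

/-- Derivability `⇒*`: the reflexive–transitive closure of single derivation steps. -/
def GDerives : List (X ⊕ A) → List (X ⊕ A) → Prop :=
  Relation.ReflTransGen (GStep o δ)

end GrammarAutomaton


section Concatenation

variable {Y : Type}

lemma lcat_assoc (S T U : Set (List Y)) : lcat (lcat S T) U = lcat S (lcat T U) :=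
  Set.image2_assoc fun _ _ _ => List.append_assoc _ _ _

lemma lcat_union_left (S T U : Set (List Y)) : lcat (S ∪ T) U = lcat S U ∪ lcat T U :=
  Set.image2_union_left

lemma lcat_union_right (S T U : Set (List Y)) : lcat S (T ∪ U) = lcat S T ∪ lcat S U :=
  Set.image2_union_right

lemma lcat_empty_left (S : Set (List Y)) : lcat ∅ S = ∅ :=
  Set.image2_empty_left

lemma lcat_singleton_singleton (u v : List Y) : lcat {u} {v} = {u ++ v} :=
  Set.image2_singleton

lemma lcat_iB_of {p : Prop} (hp : p) (S : Set (List Y)) : lcat (iB p) S = S := by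
  have hε : iB p = ({[]} : Set (List Y)) := by ext w; simp [iB, hp]
  simp [lcat, hε]

lemma iB_lcat_iB (p q : Prop) : lcat (iB p) (iB q) = (iB (p ∧ q) : Set (List Y)) := by
  ext w
  constructor
  · rintro ⟨_, ⟨rfl, hp⟩, _, ⟨rfl, hq⟩, rfl⟩
    exact ⟨rfl, hp, hq⟩
  · rintro ⟨rfl, hp, hq⟩
    exact ⟨[], ⟨rfl, hp⟩, [], ⟨rfl, hq⟩, rfl⟩

end Concatenation

section GrammarAutomaton

variable {X A : Type} (o : X → Prop) (δ : X → A → Set (List X))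

lemma oWord_append (s t : List X) : oWord o (s ++ t) ↔ oWord o s ∧ oWord o t := by
  induction s with
  | nil => simp [oWord]
  | cons x s ih => simp [oWord, ih, and_assoc]

lemma dWord_append (s t : List X) (a : A) :
    dWord o δ (s ++ t) a =
      lcat (dWord o δ s a) {t} ∪ lcat (iB (oWord o s)) (dWord o δ t a) := by
  induction s with
  | nil => simp [dWord, oWord, lcat_empty_left, lcat_iB_of]
  | cons x s ih =>
    calc dWord o δ (x :: s ++ t) a
        = lcat (δ x a) (lcat {s} {t}) ∪ lcat (iB (o x)) (dWord o δ (s ++ t) a) := by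
          rw [lcat_singleton_singleton]; rfl
      _ = lcat (lcat (δ x a) {s} ∪ lcat (iB (o x)) (dWord o δ s a)) {t} ∪
            lcat (iB (o x ∧ oWord o s)) (dWord o δ t a) := by
          rw [ih, lcat_union_right, lcat_union_left, lcat_assoc, lcat_assoc,
            ← lcat_assoc (iB (o x)) (iB (oWord o s)), iB_lcat_iB, Set.union_assoc]
      _ = _ := rfl

end GrammarAutomaton

theorem product_rule_words_general {X A : Type}
    (o : X → Prop) (δ : X → A → Set (List X))
    (s t : List X) (a : A) :
    (oWord o (s ++ t) ↔ oWord o s ∧ oWord o t) ∧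
      dWord o δ (s ++ t) a =
        lcat (dWord o δ s a) {t} ∪ lcat (iB (oWord o s)) (dWord o δ t a) :=
  ⟨oWord_append o s t, dWord_append o δ s t a⟩

/-- Product rule for words: in the grammar automaton of a grammar in Greibach
normal form, `ô({st}) = ô({s}) ∧ ô({t})` and
`{st}_a = {s}_a·{t} ∪ i(ô({s}))·{t}_a`. -/
theorem product_rule_words {X A : Type} [Finite X]
    (o : X → Prop) (δ : X → A → Set (List X))
    (hfin : ∀ x a, (δ x a).Finite)
    (s t : List X) (a : A) :
    (oWord o (s ++ t) ↔ oWord o s ∧ oWord o t) ∧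
      dWord o δ (s ++ t) a =
        lcat (dWord o δ s a) {t} ∪ lcat (iB (oWord o s)) (dWord o δ t a) :=
  product_rule_words_general o δ s t a
end

section
/- Let (X,p) be a context-free grammar in Greibach normal form. For all s, t ∈ X* and a ∈ A, if t ∈ {s}_a in the grammar automaton, then s ⇒* at in the grammar (at is derivable from s). -/
section GrammarDerivations

variable {X A : Type} {o : X → Prop} {δ : X → A → Set (List X)}

theorem GStep.prod_head {x : X} {a : A} {w : List X} (hw : w ∈ δ x a) (r : List (X ⊕ A)) :
    GStep o δ (Sum.inl x :: r) (Sum.inr a :: w.map Sum.inl ++ r) := by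
  simpa using GStep.prod (o := o) [] r x a w hw

theorem GStep.eps_head {x : X} (hx : o x) (r : List (X ⊕ A)) :
    GStep o δ (Sum.inl x :: r) r := by
  simpa using GStep.eps (δ := δ) [] r x hx

end GrammarDerivations

theorem mem_dWord_derives_general {X A : Type}
    (o : X → Prop) (δ : X → A → Set (List X))
    (s t : List X) (a : A) (h : t ∈ dWord o δ s a) :
    GDerives o δ (s.map Sum.inl) (Sum.inr a :: t.map Sum.inl) := by
  induction s generalizing t with
  | nil => exact absurd h (Set.notMem_empty t)
  | cons x w ih =>
    rcases h with ⟨v, hv, r, rfl, rfl⟩ | ⟨_, ⟨rfl, hx⟩, t', ht', rfl⟩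
    · exact Relation.ReflTransGen.single
        (by simpa using GStep.prod_head (o := o) hv (r.map Sum.inl))
    · exact Relation.ReflTransGen.head (GStep.eps_head hx _) (ih t' ht')

/-- If `t ∈ {s}_a` in the grammar automaton of a grammar in Greibach normal form,
then `s ⇒* at` in the grammar. -/
theorem mem_dWord_derives {X A : Type} [Finite X]
    (o : X → Prop) (δ : X → A → Set (List X))
    (hfin : ∀ x a, (δ x a).Finite)
    (s t : List X) (a : A) (h : t ∈ dWord o δ s a) :
    GDerives o δ (s.map Sum.inl) (Sum.inr a :: t.map Sum.inl) :=
  mem_dWord_derives_general o δ s t a h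
end

section
/- Let (X,p) be a context-free grammar in Greibach normal form. For every s ∈ X* and w ∈ A*: s ⇒* w if and only if ô({s}_w) = 1 in the grammar automaton generated from (X,p). -/
/-!
Derivations to a terminal word can be taken leftmost, and a leftmost derivation can match
each terminal against the input as soon as it is produced. From `x :: m` on input `a :: w`
such a derivation either erases `x` (if `o x`) or rewrites `x` to `a u` with `u ∈ δ x a` and
continues from `u ++ m` on `w`: these are exactly the two clauses of the derivative
`{x s}_a = x_a·{s} ∪ i(o(x))·{s}_a`, so both sides of the equivalence satisfy the same recursion.
-/

variable {X A : Type} {o : X → Prop} {δ : X → A → Set (List X)}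

/-- Leftmost derivations of `w` from the mixed word `m`, matching each terminal against `w` as
soon as it is in front. -/
inductive Generates (o : X → Prop) (δ : X → A → Set (List X)) : List (X ⊕ A) → List A → Prop
  | nil : Generates o δ [] []
  | term (a : A) {m : List (X ⊕ A)} {w : List A} :
      Generates o δ m w → Generates o δ (Sum.inr a :: m) (a :: w)
  | eps {x : X} {m : List (X ⊕ A)} {w : List A} :
      o x → Generates o δ m w → Generates o δ (Sum.inl x :: m) w
  | prod {x : X} {a : A} {u : List X} {m : List (X ⊕ A)} {w : List A} :
      u ∈ δ x a → Generates o δ (u.map Sum.inl ++ m) w →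
        Generates o δ (Sum.inl x :: m) (a :: w)

namespace Generates

theorem nil_iff {w : List A} : Generates o δ [] w ↔ w = [] :=
  ⟨fun h => by cases h; rfl, fun h => h ▸ nil⟩

theorem inr_cons_iff {a : A} {m : List (X ⊕ A)} {w : List A} :
    Generates o δ (Sum.inr a :: m) w ↔ ∃ w', w = a :: w' ∧ Generates o δ m w' := by
  constructor
  · rintro ⟨⟩
    exact ⟨_, rfl, ‹_›⟩
  · rintro ⟨w', rfl, h⟩
    exact term a h

theorem inl_cons_iff {x : X} {m : List (X ⊕ A)} {w : List A} :
    Generates o δ (Sum.inl x :: m) w ↔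
      (o x ∧ Generates o δ m w) ∨
        ∃ a u w', w = a :: w' ∧ u ∈ δ x a ∧ Generates o δ (u.map Sum.inl ++ m) w' := by
  constructor
  · intro h
    cases h with
    | eps hx h => exact Or.inl ⟨hx, h⟩
    | prod hu h => exact Or.inr ⟨_, _, _, rfl, hu, h⟩
  · rintro (⟨hx, h⟩ | ⟨a, u, w', rfl, hu, h⟩)
    · exact eps hx h
    · exact prod hu h

theorem map_inr (w : List A) : Generates o δ (w.map Sum.inr) w := by
  induction w with
  | nil => exact nil
  | cons a w ih => exact term a ih

theorem append {m₁ m₂ : List (X ⊕ A)} {w₁ w₂ : List A}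
    (h₁ : Generates o δ m₁ w₁) (h₂ : Generates o δ m₂ w₂) :
    Generates o δ (m₁ ++ m₂) (w₁ ++ w₂) := by
  induction h₁ with
  | nil => exact h₂
  | term a _ ih => exact term a ih
  | eps hx _ ih => exact eps hx ih
  | prod hu _ ih => exact prod hu (by simpa using ih)

theorem exists_of_append {m₁ m₂ : List (X ⊕ A)} {w : List A}
    (h : Generates o δ (m₁ ++ m₂) w) :
    ∃ w₁ w₂, w = w₁ ++ w₂ ∧ Generates o δ m₁ w₁ ∧ Generates o δ m₂ w₂ := by
  generalize hm : m₁ ++ m₂ = m at h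
  induction h generalizing m₁ with
  | nil =>
    obtain ⟨rfl, rfl⟩ := List.append_eq_nil_iff.1 hm
    exact ⟨[], [], rfl, nil, nil⟩
  | @term a m w h ih =>
    cases m₁ with
    | nil => exact ⟨[], _, rfl, nil, List.nil_append m₂ ▸ hm ▸ term a h⟩
    | cons y m₁ =>
      rw [List.cons_append, List.cons.injEq] at hm
      obtain ⟨rfl, hm⟩ := hm
      obtain ⟨w₁, w₂, rfl, h₁, h₂⟩ := ih hm
      exact ⟨a :: w₁, w₂, rfl, term a h₁, h₂⟩
  | @eps x m w hx h ih =>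
    cases m₁ with
    | nil => exact ⟨[], _, rfl, nil, List.nil_append m₂ ▸ hm ▸ eps hx h⟩
    | cons y m₁ =>
      rw [List.cons_append, List.cons.injEq] at hm
      obtain ⟨rfl, hm⟩ := hm
      obtain ⟨w₁, w₂, rfl, h₁, h₂⟩ := ih hm
      exact ⟨w₁, w₂, rfl, eps hx h₁, h₂⟩
  | @prod x a u m w hu h ih =>
    cases m₁ with
    | nil => exact ⟨[], _, rfl, nil, List.nil_append m₂ ▸ hm ▸ prod hu h⟩
    | cons y m₁ =>
      rw [List.cons_append, List.cons.injEq] at hm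
      obtain ⟨rfl, hm⟩ := hm
      obtain ⟨w₁, w₂, rfl, h₁, h₂⟩ := ih (m₁ := u.map Sum.inl ++ m₁) (by rw [List.append_assoc, hm])
      exact ⟨a :: w₁, w₂, rfl, prod hu h₁, h₂⟩

end Generates

theorem gStep_cons {m m' : List (X ⊕ A)} (y : X ⊕ A) (h : GStep o δ m m') :
    GStep o δ (y :: m) (y :: m') := by
  cases h with
  | eps l r x hx => exact GStep.eps (y :: l) r x hx
  | prod l r x a u hu => exact GStep.prod (y :: l) r x a u hu

theorem gDerives_cons {m m' : List (X ⊕ A)} (y : X ⊕ A) (h : GDerives o δ m m') :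
    GDerives o δ (y :: m) (y :: m') :=
  h.lift (y :: ·) fun _ _ => gStep_cons y

namespace Generates

theorem of_gStep {m m' : List (X ⊕ A)} {w : List A} (hs : GStep o δ m m')
    (h : Generates o δ m' w) : Generates o δ m w := by
  cases hs with
  | eps l r x hx =>
    obtain ⟨w₁, w₂, rfl, hl, hr⟩ := h.exists_of_append
    exact hl.append (eps hx hr)
  | prod l r x a u hu =>
    rw [List.append_assoc, List.cons_append] at h
    obtain ⟨w₁, w₂, rfl, hl, hr⟩ := h.exists_of_append
    obtain ⟨w₂, rfl, hrest⟩ := inr_cons_iff.1 hr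
    exact hl.append (prod hu hrest)

theorem of_gDerives {m : List (X ⊕ A)} {w : List A} (h : GDerives o δ m (w.map Sum.inr)) :
    Generates o δ m w := by
  induction h using Relation.ReflTransGen.head_induction_on with
  | refl => exact map_inr w
  | head hs _ ih => exact of_gStep hs ih

theorem gDerives {m : List (X ⊕ A)} {w : List A} (h : Generates o δ m w) :
    GDerives o δ m (w.map Sum.inr) := by
  induction h with
  | nil => exact .refl
  | term a _ ih => exact gDerives_cons _ ih
  | @eps x m _ hx _ ih => exact .head (GStep.eps [] m x hx) ih
  | @prod x a u m _ hu _ ih => exact .head (GStep.prod [] m x a u hu) (gDerives_cons _ ih)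

end Generates

theorem gDerives_iff_generates {m : List (X ⊕ A)} {w : List A} :
    GDerives o δ m (w.map Sum.inr) ↔ Generates o δ m w :=
  ⟨Generates.of_gDerives, Generates.gDerives⟩

theorem dSet_singleton (s : List X) (a : A) : dSet o δ {s} a = dWord o δ s a :=
  Set.biUnion_singleton ..

theorem dSetWord_eq_biUnion (S : Set (List X)) (w : List A) :
    dSetWord o δ S w = ⋃ s ∈ S, dSetWord o δ {s} w := by
  induction w generalizing S with
  | nil => exact (Set.biUnion_of_singleton S).symm
  | cons a w ih =>
    simp only [dSetWord, ih (dSet o δ _ a), dSet_singleton, ih (dWord o δ _ a)]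
    ext t
    simp [dSet]

theorem oSet_biUnion {ι : Type*} (I : Set ι) (S : ι → Set (List X)) :
    oSet o (⋃ i ∈ I, S i) ↔ ∃ i ∈ I, oSet o (S i) := by
  simp only [oSet, Set.mem_iUnion₂]
  tauto

theorem oSet_dSetWord_singleton_nil (s : List X) :
    oSet o (dSetWord o δ {s} []) ↔ oWord o s := by
  simp [dSetWord, oSet]

theorem oSet_dSetWord_singleton_cons (s : List X) (a : A) (w : List A) :
    oSet o (dSetWord o δ {s} (a :: w)) ↔ ∃ t ∈ dWord o δ s a, oSet o (dSetWord o δ {t} w) := by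
  rw [dSetWord, dSet_singleton, dSetWord_eq_biUnion, oSet_biUnion]

theorem mem_dWord_cons {x : X} {s : List X} {a : A} {t : List X} :
    t ∈ dWord o δ (x :: s) a ↔ (∃ u ∈ δ x a, t = u ++ s) ∨ (o x ∧ t ∈ dWord o δ s a) := by
  simp [dWord, lcat, iB, eq_comm]

theorem generates_map_inl_iff (s : List X) (w : List A) :
    Generates o δ (s.map Sum.inl) w ↔ oSet o (dSetWord o δ {s} w) := by
  induction w generalizing s with
  | nil =>
    rw [oSet_dSetWord_singleton_nil]
    induction s with
    | nil => simp [Generates.nil_iff, oWord]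
    | cons x s ih => simp [Generates.inl_cons_iff, oWord, ih]
  | cons a w ihw =>
    rw [oSet_dSetWord_singleton_cons]
    induction s with
    | nil => simp [Generates.nil_iff, dWord]
    | cons x s ihs =>
      simp only [List.map_cons, Generates.inl_cons_iff, ihs, mem_dWord_cons, List.cons.injEq,
        ← List.map_append]
      constructor
      · rintro (⟨hx, t, ht, hw⟩ | ⟨_, u, _, ⟨rfl, rfl⟩, hu, hw⟩)
        · exact ⟨t, .inr ⟨hx, ht⟩, hw⟩
        · exact ⟨u ++ s, .inl ⟨u, hu, rfl⟩, (ihw _).1 hw⟩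
      · rintro ⟨t, ⟨u, hu, rfl⟩ | ⟨hx, ht⟩, hw⟩
        · exact .inr ⟨a, u, w, ⟨rfl, rfl⟩, hu, (ihw _).2 hw⟩
        · exact .inl ⟨hx, t, ht, hw⟩

theorem derives_iff_oSet_general {X A : Type}
    (o : X → Prop) (δ : X → A → Set (List X))
    (s : List X) (w : List A) :
    GDerives o δ (s.map Sum.inl) (w.map Sum.inr) ↔
      oSet o (dSetWord o δ {s} w) :=
  gDerives_iff_generates.trans (generates_map_inl_iff s w)

/-- For every `s ∈ X*` and `w ∈ A*`: `s ⇒* w` iff `ô({s}_w) = 1`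
in the grammar automaton generated from the grammar in Greibach normal form. -/
theorem derives_iff_oSet {X A : Type} [Finite X]
    (o : X → Prop) (δ : X → A → Set (List X))
    (hfin : ∀ x a, (δ x a).Finite)
    (s : List X) (w : List A) :
    GDerives o δ (s.map Sum.inl) (w.map Sum.inr) ↔
      oSet o (dSetWord o δ {s} w) :=
  derives_iff_oSet_general o δ s w
end

section
/- The structure (B × P_ω((X+A)*)^A, ⊗, ⊕, 𝟙, 𝟘) is an idempotent semiring, where 𝟘 = (0, λa.∅), 𝟙 = (1, λa.∅), (o₁,δ₁) ⊕ (o₂,δ₂) = (o₁∨o₂, λa.(δ₁(a) ∪ δ₂(a))), and (o₁,δ₁) ⊗ (o₂,δ₂) = (o₁∧o₂, λa.(δ₁(a)·(i(o₂) ∪ ⋃_{b∈A}{b}·δ₂(b)) ∪ i(o₁)·δ₂(a))). -/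
section PairSemiring

variable {X A : Type}

/-- The carrier `B × P_ω((X+A)*)^A` (with `B` modelled as `Prop` and finite
languages as finitely-supported elements of `Set (List (X ⊕ A))`). -/
abbrev Pair (X A : Type) : Type := Prop × (A → Set (List (X ⊕ A)))

/-- `𝟘 = (0, λa.∅)`. -/
def pZero : Pair X A := (False, fun _ => ∅)

/-- `𝟙 = (1, λa.∅)`. -/
def pOne : Pair X A := (True, fun _ => ∅)

/-- `(o₁,δ₁) ⊕ (o₂,δ₂) = (o₁ ∨ o₂, λa. δ₁(a) ∪ δ₂(a))`. -/
def pAdd (p q : Pair X A) : Pair X A :=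
  (p.1 ∨ q.1, fun a => p.2 a ∪ q.2 a)

/-- `(o₁,δ₁) ⊗ (o₂,δ₂) =
(o₁ ∧ o₂, λa. δ₁(a)·(i(o₂) ∪ ⋃_{b∈A} {b}·δ₂(b)) ∪ i(o₁)·δ₂(a))`. -/
def pMul (p q : Pair X A) : Pair X A :=
  (p.1 ∧ q.1, fun a =>
    lcat (p.2 a) (iB q.1 ∪ ⋃ b : A, lcat {[Sum.inr b]} (q.2 b)) ∪
      lcat (iB p.1) (q.2 a))

end PairSemiring

namespace Language

variable {α : Type*} {l m : Language α}

theorem nil_mem_mul : [] ∈ l * m ↔ [] ∈ l ∧ [] ∈ m := by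
  simp only [mem_mul, List.append_eq_nil_iff]
  constructor
  · rintro ⟨_, hu, _, hv, rfl, rfl⟩
    exact ⟨hu, hv⟩
  · rintro ⟨hl, hm⟩
    exact ⟨[], hl, [], hm, rfl, rfl⟩

theorem cons_mem_mul {a : α} {v : List α} :
    a :: v ∈ l * m ↔ ([] ∈ l ∧ a :: v ∈ m) ∨ ∃ u, a :: u ∈ l ∧ ∃ t ∈ m, u ++ t = v := by
  rw [mem_mul]
  constructor
  · rintro ⟨(_ | ⟨c, u⟩), hu, t, ht, h⟩
    · subst h
      exact .inl ⟨hu, ht⟩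
    · obtain ⟨rfl, rfl⟩ := List.cons_eq_cons.mp h
      exact .inr ⟨u, hu, t, ht, rfl⟩
  · rintro (⟨hl, hm⟩ | ⟨u, hu, t, ht, rfl⟩)
    · exact ⟨[], hl, _, hm, rfl⟩
    · exact ⟨a :: u, hu, t, ht, rfl⟩

end Language

theorem mem_lcat_iB {Y : Type} {o : Prop} {S : Set (List Y)} {w : List Y} :
    w ∈ lcat (iB o) S ↔ o ∧ w ∈ S := by
  simp [lcat, iB]

section PairLanguage

variable {X A : Type}

namespace Pair

/-- The language `i(o) ∪ ⋃_b {b}·δ(b)` of `p = (o, δ)`, described by its membership predicate. -/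
def toLanguage (p : Pair X A) : Language (X ⊕ A) :=
  {w | match w with
    | [] => p.1
    | .inl _ :: _ => False
    | .inr b :: v => v ∈ p.2 b}

variable {p q : Pair X A} {b : A} {v : List (X ⊕ A)}

@[simp]
theorem nil_mem_toLanguage : [] ∈ p.toLanguage ↔ p.1 := Iff.rfl

@[simp]
theorem inl_cons_notMem_toLanguage (x : X) : .inl x :: v ∉ p.toLanguage := id

@[simp]
theorem inr_cons_mem_toLanguage : .inr b :: v ∈ p.toLanguage ↔ v ∈ p.2 b := Iff.rfl

theorem toLanguage_injective : Function.Injective (toLanguage : Pair X A → Language (X ⊕ A)) := by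
  intro p q h
  refine Prod.ext (propext ?_) (funext fun b => Set.ext fun v => ?_)
  · rw [← nil_mem_toLanguage, h, nil_mem_toLanguage]
  · rw [← inr_cons_mem_toLanguage, h, inr_cons_mem_toLanguage]

theorem toLanguage_pZero : (pZero : Pair X A).toLanguage = 0 := by
  ext (_ | ⟨_ | _, _⟩) <;> simp [pZero, Language.notMem_zero]

theorem toLanguage_pOne : (pOne : Pair X A).toLanguage = 1 := by
  ext (_ | ⟨_ | _, _⟩) <;> simp [pOne, Language.mem_one]

theorem toLanguage_pAdd : (pAdd p q).toLanguage = p.toLanguage + q.toLanguage := by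
  ext (_ | ⟨_ | _, _⟩) <;> simp [pAdd, Language.mem_add]

theorem iB_union_iUnion_eq_toLanguage :
    iB q.1 ∪ ⋃ b : A, lcat {[Sum.inr b]} (q.2 b) = (q.toLanguage : Set (List (X ⊕ A))) := by
  ext w
  change _ ↔ w ∈ q.toLanguage
  rcases w with _ | ⟨_ | _, _⟩ <;> simp [iB, lcat]

theorem toLanguage_pMul : (pMul p q).toLanguage = p.toLanguage * q.toLanguage := by
  ext (_ | ⟨_ | b, v⟩)
  · simp [pMul, Language.nil_mem_mul]
  · simp [Language.cons_mem_mul]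
  · change v ∈ lcat (p.2 b) _ ∪ lcat (iB p.1) (q.2 b) ↔ _
    rw [iB_union_iUnion_eq_toLanguage, Set.mem_union, mem_lcat_iB, Language.cons_mem_mul, or_comm]
    simp only [nil_mem_toLanguage, inr_cons_mem_toLanguage]
    rfl

end Pair

end PairLanguage

theorem pair_idempotent_semiring_general {X A : Type} :
    ∀ p q r : Pair X A,
      (∀ a, (p.2 a).Finite) → (∀ a, (q.2 a).Finite) → (∀ a, (r.2 a).Finite) →
      pAdd pZero p = p ∧
      pAdd p pZero = p ∧
      pAdd p q = pAdd q p ∧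
      pAdd (pAdd p q) r = pAdd p (pAdd q r) ∧
      pAdd p p = p ∧
      pMul pOne p = p ∧
      pMul p pOne = p ∧
      pMul (pMul p q) r = pMul p (pMul q r) ∧
      pMul (pAdd p q) r = pAdd (pMul p r) (pMul q r) ∧
      pMul p (pAdd q r) = pAdd (pMul p q) (pMul p r) ∧
      pMul p pZero = pZero ∧
      pMul pZero p = pZero := by
  intro p q r _ _ _
  refine ⟨?_, ?_, ?_, ?_, ?_, ?_, ?_, ?_, ?_, ?_, ?_, ?_⟩ <;> apply Pair.toLanguage_injective <;>
    simp only [Pair.toLanguage_pZero, Pair.toLanguage_pOne, Pair.toLanguage_pAdd, Pair.toLanguage_pMul]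
  exacts [zero_add _, add_zero _, add_comm _ _, add_assoc _ _ _, Language.add_self _, one_mul _,
    mul_one _, mul_assoc _ _ _, add_mul _ _ _, mul_add _ _ _, mul_zero _, zero_mul _]

/-- `(B × P_ω((X+A)*)^A, ⊗, ⊕, 𝟙, 𝟘)` is an idempotent semiring. -/
theorem pair_idempotent_semiring {X A : Type} [Fintype A] :
    ∀ p q r : Pair X A,
      (∀ a, (p.2 a).Finite) → (∀ a, (q.2 a).Finite) → (∀ a, (r.2 a).Finite) →
      pAdd pZero p = p ∧
      pAdd p pZero = p ∧
      pAdd p q = pAdd q p ∧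
      pAdd (pAdd p q) r = pAdd p (pAdd q r) ∧
      pAdd p p = p ∧
      pMul pOne p = p ∧
      pMul p pOne = p ∧
      pMul (pMul p q) r = pMul p (pMul q r) ∧
      pMul (pAdd p q) r = pAdd (pMul p r) (pMul q r) ∧
      pMul p (pAdd q r) = pAdd (pMul p q) (pMul p r) ∧
      pMul p pZero = pZero ∧
      pMul pZero p = pZero :=
  pair_idempotent_semiring_general
end
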